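/- Let ℓ ≥ 1, let (p₁,…,p_ℓ) and (q₁,…,q_ℓ) be ℓ-tuples of distinct points of ℂ, and set g(z) = |(z−p₁)⋯(z−p_ℓ)|² / |(z−q₁)⋯(z−q_ℓ)|². Then for every δ > 0 and every R > max_j max(|p_j|, |q_j|), the double integral ∬_{|z| ≥ R, |w| ≥ R} |g(z) − g(w)|² e^{−δ|z−w|} dλ(z) dλ(w) is finite. -/

import Mathlib

/-!
In the coordinate `u = 1/z` the function `g` becomes `u ↦ |∏ (1 - u pᵢ) / (1 - u qᵢ)|²`, which is
smooth on the closed disc `|u| ≤ 1/R` because `R > |qⱼ|`, hence Lipschitz there. Since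
`|1/z - 1/w| = |z - w| / (|z| |w|)`, this gives `|g z - g w|² ≲ (|z|⁻⁴ + |w|⁻⁴) |z - w|²` for
`|z|, |w| ≥ R`, so the integrand is dominated by `((1 + |z|)⁻⁴ + (1 + |w|)⁻⁴) k (z - w)` with
`k u = |u|² e^{-δ|u|}`; both factors are integrable on `ℂ`, and such a convolution-type
majorant has finite integral over `ℂ × ℂ`.
-/

open MeasureTheory Metric Module Set
open scoped ENNReal

theorem integrable_norm_pow_mul_exp_neg_mul_norm {E : Type*} [NormedAddCommGroup E]
    [NormedSpace ℝ E] [FiniteDimensional ℝ E] [Nontrivial E] [MeasurableSpace E] [BorelSpace E]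
    (μ : Measure E) [μ.IsAddHaarMeasure] (n : ℕ) {b : ℝ} (hb : 0 < b) :
    Integrable (fun x : E ↦ ‖x‖ ^ n * Real.exp (-b * ‖x‖)) μ := by
  rw [integrable_fun_norm_addHaar μ (f := fun t ↦ t ^ n * Real.exp (-b * t))]
  refine (integrableOn_rpow_mul_exp_neg_mul_rpow (s := (finrank ℝ E - 1 + n : ℕ))
    (p := 1) (neg_one_lt_zero.trans_le (Nat.cast_nonneg _)) one_pos hb).congr_fun
    (fun t _ ↦ ?_) measurableSet_Ioi
  simp only [Real.rpow_one, Real.rpow_natCast, smul_eq_mul, pow_add]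
  ring

section Convolution

variable {G : Type*} [AddCommGroup G] [MeasurableSpace G] [MeasurableAdd₂ G] [MeasurableNeg G]
  {μ : Measure G} [SFinite μ] [μ.IsAddLeftInvariant] {f k : G → ℝ≥0∞}

theorem lintegral_prod_mul_sub_fst [μ.IsNegInvariant] (hf : Measurable f) (hk : Measurable k) :
    ∫⁻ x, f x.1 * k (x.1 - x.2) ∂μ.prod μ = (∫⁻ y, f y ∂μ) * ∫⁻ u, k u ∂μ := by
  rw [lintegral_prod _ (by fun_prop)]
  calc ∫⁻ y, ∫⁻ z, f y * k (y - z) ∂μ ∂μ = ∫⁻ y, f y * ∫⁻ z, k (y - z) ∂μ ∂μ := by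
        congr with y; exact lintegral_const_mul _ (by fun_prop)
    _ = _ := by simp_rw [lintegral_sub_left_eq_self]; exact lintegral_mul_const _ hf

theorem lintegral_prod_mul_sub_snd (hf : Measurable f) (hk : Measurable k) :
    ∫⁻ x, f x.2 * k (x.1 - x.2) ∂μ.prod μ = (∫⁻ y, f y ∂μ) * ∫⁻ u, k u ∂μ := by
  rw [lintegral_prod_symm _ (by fun_prop)]
  calc ∫⁻ z, ∫⁻ y, f z * k (y - z) ∂μ ∂μ = ∫⁻ z, f z * ∫⁻ y, k (y - z) ∂μ ∂μ := by
        congr with z; exact lintegral_const_mul _ (by fun_prop)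
    _ = _ := by simp_rw [lintegral_sub_right_eq_self]; exact lintegral_mul_const _ hf

theorem lintegral_prod_add_mul_sub_lt_top [μ.IsNegInvariant] (hf : Measurable f)
    (hk : Measurable k) (hfi : ∫⁻ y, f y ∂μ < ⊤) (hki : ∫⁻ u, k u ∂μ < ⊤) :
    ∫⁻ x, (f x.1 + f x.2) * k (x.1 - x.2) ∂μ.prod μ < ⊤ := by
  simp_rw [add_mul]
  rw [lintegral_add_left (by fun_prop), lintegral_prod_mul_sub_fst hf hk,
    lintegral_prod_mul_sub_snd hf hk]
  exact ENNReal.add_lt_top.2 ⟨ENNReal.mul_lt_top hfi hki, ENNReal.mul_lt_top hfi hki⟩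

end Convolution

theorem inv_le_div_mul_one_add_inv {R t : ℝ} (hR : 0 < R) (ht : R ≤ t) :
    t⁻¹ ≤ (1 + R) / R * (1 + t)⁻¹ := by
  have ht0 : 0 < t := hR.trans_le ht
  rw [div_mul_eq_mul_div, ← div_eq_mul_inv, div_div, inv_le_comm₀ ht0 (by positivity), inv_div,
    div_le_iff₀ (by positivity)]
  nlinarith

theorem norm_inv_sub_inv_sq_le {R : ℝ} (hR : 0 < R) {z w : ℂ} (hz : R ≤ ‖z‖) (hw : R ≤ ‖w‖) :
    ‖z⁻¹ - w⁻¹‖ ^ 2 ≤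
      ((1 + R) / R) ^ 4 * ((1 + ‖z‖) ^ (-4 : ℝ) + (1 + ‖w‖) ^ (-4 : ℝ)) * ‖z - w‖ ^ 2 := by
  have hz0 : z ≠ 0 := norm_pos_iff.1 (hR.trans_le hz)
  have hw0 : w ≠ 0 := norm_pos_iff.1 (hR.trans_le hw)
  have hA := inv_le_div_mul_one_add_inv hR hz
  have hB := inv_le_div_mul_one_add_inv hR hw
  set A := (1 + R) / R * (1 + ‖z‖)⁻¹
  set B := (1 + R) / R * (1 + ‖w‖)⁻¹
  have hprod : ‖z‖⁻¹ * ‖w‖⁻¹ ≤ A * B := mul_le_mul hA hB (by positivity) (by positivity)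
  have hrpow : ∀ t : ℝ, 0 ≤ t → (1 + t) ^ (-4 : ℝ) = ((1 + t)⁻¹) ^ 4 := fun t ht ↦ by
    rw [Real.rpow_neg (by positivity), inv_pow, ← Real.rpow_natCast]; norm_num
  calc ‖z⁻¹ - w⁻¹‖ ^ 2 = (‖z‖⁻¹ * ‖w‖⁻¹) ^ 2 * ‖z - w‖ ^ 2 := by
        rw [inv_sub_inv hz0 hw0, norm_div, norm_mul, norm_sub_rev]; field_simp
    _ ≤ (A * B) ^ 2 * ‖z - w‖ ^ 2 := by gcongr
    _ ≤ (A ^ 4 + B ^ 4) * ‖z - w‖ ^ 2 := by gcongr; nlinarith [sq_nonneg (A ^ 2 - B ^ 2)]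
    _ = _ := by rw [hrpow _ (norm_nonneg z), hrpow _ (norm_nonneg w)]; ring

section RationalFunction

variable {ι : Type*} [Fintype ι] (p q : ι → ℂ)

noncomputable def sqNormRatio (z : ℂ) : ℝ := ‖∏ i, (z - p i)‖ ^ 2 / ‖∏ i, (z - q i)‖ ^ 2

noncomputable def reversedRatio (u : ℂ) : ℂ := ∏ i, (1 - u * p i) / (1 - u * q i)

theorem sqNormRatio_eq_norm_reversedRatio_inv_sq {z : ℂ} (hz : z ≠ 0) :
    sqNormRatio p q z = ‖reversedRatio p q z⁻¹‖ ^ 2 := by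
  have hfactor : ∀ a : ℂ, 1 - z⁻¹ * a = z⁻¹ * (z - a) := fun a ↦ by field_simp
  simp only [reversedRatio, hfactor, mul_div_mul_left _ _ (inv_ne_zero hz),
    Finset.prod_div_distrib, norm_div, div_pow, sqNormRatio]

theorem exists_lipschitzOnWith_norm_reversedRatio_sq {R : ℝ} (hR : 0 < R)
    (hq : ∀ i, ‖q i‖ < R) :
    ∃ L, LipschitzOnWith L (fun u ↦ ‖reversedRatio p q u‖ ^ 2) (closedBall 0 R⁻¹) := by
  refine ContDiffOn.exists_lipschitzOnWith (n := 1) ?_ one_ne_zero (convex_closedBall _ _)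
    (isCompact_closedBall _ _)
  refine (ContDiffOn.restrict_scalars ℝ (𝕜' := ℂ) (contDiffOn_prod fun i _ ↦ ?_)).norm_sq ℝ
  refine (contDiffOn_const.sub (contDiffOn_id.mul contDiffOn_const)).div
    (contDiffOn_const.sub (contDiffOn_id.mul contDiffOn_const)) fun u hu ↦ ?_
  have hu : ‖u‖ ≤ R⁻¹ := mem_closedBall_zero_iff.1 hu
  have hlt : ‖u * q i‖ < 1 := calc
    ‖u * q i‖ ≤ R⁻¹ * ‖q i‖ := by rw [norm_mul]; gcongr
    _ < R⁻¹ * R := by gcongr; exact hq i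
    _ = 1 := inv_mul_cancel₀ hR.ne'
  exact sub_ne_zero.2 fun h ↦ hlt.ne (by rw [← h, norm_one])

theorem exists_sq_abs_sqNormRatio_sub_le {R : ℝ} (hR : 0 < R) (hq : ∀ i, ‖q i‖ < R) :
    ∃ C, ∀ z w : ℂ, R ≤ ‖z‖ → R ≤ ‖w‖ →
      |sqNormRatio p q z - sqNormRatio p q w| ^ 2 ≤
        C * ((1 + ‖z‖) ^ (-4 : ℝ) + (1 + ‖w‖) ^ (-4 : ℝ)) * ‖z - w‖ ^ 2 := by
  obtain ⟨L, hL⟩ := exists_lipschitzOnWith_norm_reversedRatio_sq p q hR hq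
  refine ⟨L ^ 2 * ((1 + R) / R) ^ 4, fun z w hz hw ↦ ?_⟩
  have hinv : ∀ {ζ : ℂ}, R ≤ ‖ζ‖ → ζ⁻¹ ∈ closedBall 0 R⁻¹ := fun hζ ↦ by
    rw [mem_closedBall_zero_iff, norm_inv]; exact inv_anti₀ hR hζ
  have hne : ∀ {ζ : ℂ}, R ≤ ‖ζ‖ → ζ ≠ 0 := fun hζ ↦ norm_pos_iff.1 (hR.trans_le hζ)
  have hlip : |sqNormRatio p q z - sqNormRatio p q w| ≤ L * ‖z⁻¹ - w⁻¹‖ := by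
    rw [sqNormRatio_eq_norm_reversedRatio_inv_sq p q (hne hz),
      sqNormRatio_eq_norm_reversedRatio_inv_sq p q (hne hw), ← Real.dist_eq, ← dist_eq_norm]
    exact hL.dist_le_mul _ (hinv hz) _ (hinv hw)
  calc |sqNormRatio p q z - sqNormRatio p q w| ^ 2 ≤ (L * ‖z⁻¹ - w⁻¹‖) ^ 2 := by gcongr
    _ ≤ L ^ 2 * (((1 + R) / R) ^ 4 * ((1 + ‖z‖) ^ (-4 : ℝ) + (1 + ‖w‖) ^ (-4 : ℝ)) *
          ‖z - w‖ ^ 2) := by rw [mul_pow]; gcongr; exact norm_inv_sub_inv_sq_le hR hz hw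
    _ = _ := by ring

end RationalFunction

theorem stmt8_general (ℓ : ℕ) (hℓ : 1 ≤ ℓ) (p q : Fin ℓ → ℂ)
    (δ R : ℝ) (hδ : 0 < δ)
    (hR : ∀ j, ‖p j‖ < R ∧ ‖q j‖ < R) :
    (∫⁻ x : ℂ × ℂ in {x : ℂ × ℂ | R ≤ ‖x.1‖ ∧ R ≤ ‖x.2‖},
      ENNReal.ofReal
        (|‖∏ i, (x.1 - p i)‖ ^ 2 / ‖∏ i, (x.1 - q i)‖ ^ 2 -
            ‖∏ i, (x.2 - p i)‖ ^ 2 / ‖∏ i, (x.2 - q i)‖ ^ 2| ^ 2 *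
          Real.exp (-δ * ‖x.1 - x.2‖))) < ⊤ := by
  have hR0 : 0 < R := (norm_nonneg _).trans_lt (hR ⟨0, hℓ⟩).2
  obtain ⟨C, hC⟩ := exists_sq_abs_sqNormRatio_sub_le p q hR0 fun j ↦ (hR j).2
  set f : ℂ → ℝ≥0∞ := fun z ↦ ENNReal.ofReal ((1 + ‖z‖) ^ (-4 : ℝ))
  set k : ℂ → ℝ≥0∞ := fun u ↦ ENNReal.ofReal (‖u‖ ^ 2 * Real.exp (-δ * ‖u‖))
  have hf : ∫⁻ z, f z < ⊤ :=
    finite_integral_one_add_norm (by norm_num [Complex.finrank_real_complex])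
  have hk : ∫⁻ u, k u < ⊤ :=
    (integrable_norm_pow_mul_exp_neg_mul_norm volume 2 hδ).lintegral_lt_top
  have hpt : ∀ x ∈ {x : ℂ × ℂ | R ≤ ‖x.1‖ ∧ R ≤ ‖x.2‖},
      ENNReal.ofReal (|sqNormRatio p q x.1 - sqNormRatio p q x.2| ^ 2 *
        Real.exp (-δ * ‖x.1 - x.2‖)) ≤ ENNReal.ofReal C * ((f x.1 + f x.2) * k (x.1 - x.2)) := by
    rintro ⟨z, w⟩ ⟨hz, hw⟩
    rw [← ENNReal.ofReal_add (by positivity) (by positivity), ← ENNReal.ofReal_mul (by positivity),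
      ← ENNReal.ofReal_mul' (by positivity)]
    refine ENNReal.ofReal_le_ofReal ?_
    calc _ ≤ C * ((1 + ‖z‖) ^ (-4 : ℝ) + (1 + ‖w‖) ^ (-4 : ℝ)) * ‖z - w‖ ^ 2 *
          Real.exp (-δ * ‖z - w‖) := by gcongr; exact hC z w hz hw
      _ = _ := by ring
  calc _ ≤ ∫⁻ x in {x : ℂ × ℂ | R ≤ ‖x.1‖ ∧ R ≤ ‖x.2‖},
        ENNReal.ofReal C * ((f x.1 + f x.2) * k (x.1 - x.2)) := setLIntegral_mono (by fun_prop) hpt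
    _ ≤ ∫⁻ x : ℂ × ℂ, ENNReal.ofReal C * ((f x.1 + f x.2) * k (x.1 - x.2)) :=
        setLIntegral_le_lintegral _ _
    _ = ENNReal.ofReal C * ∫⁻ x : ℂ × ℂ, (f x.1 + f x.2) * k (x.1 - x.2) :=
        lintegral_const_mul _ (by fun_prop)
    _ < ⊤ := ENNReal.mul_lt_top ENNReal.ofReal_lt_top
        (lintegral_prod_add_mul_sub_lt_top (by fun_prop) (by fun_prop) hf hk)

/-- With `g(z) = |∏(z−pᵢ)|²/|∏(z−qᵢ)|²`, for every `δ > 0` and every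
`R > maxⱼ max(|pⱼ|,|qⱼ|)`, the integral
`∬_{|z|≥R, |w|≥R} |g(z) − g(w)|² e^(−δ|z−w|) dλ(z) dλ(w)` is finite. -/
theorem stmt8 (ℓ : ℕ) (hℓ : 1 ≤ ℓ) (p q : Fin ℓ → ℂ)
    (hp : Function.Injective p) (hq : Function.Injective q)
    (δ R : ℝ) (hδ : 0 < δ)
    (hR : ∀ j, ‖p j‖ < R ∧ ‖q j‖ < R) :
    (∫⁻ x : ℂ × ℂ in {x : ℂ × ℂ | R ≤ ‖x.1‖ ∧ R ≤ ‖x.2‖},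
      ENNReal.ofReal
        (|‖∏ i, (x.1 - p i)‖ ^ 2 / ‖∏ i, (x.1 - q i)‖ ^ 2 -
            ‖∏ i, (x.2 - p i)‖ ^ 2 / ‖∏ i, (x.2 - q i)‖ ^ 2| ^ 2 *
          Real.exp (-δ * ‖x.1 - x.2‖))) < ⊤ :=
  stmt8_general ℓ hℓ p q δ R hδ hR
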